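/- Two Alexander biquandles M and M' are isomorphic as biquandles if and only if (i) there is an isomorphism of Z[s^{±1}, t^{±1}]-modules h : (1−st)M → (1−st)M', and (ii) for every set of coset representatives A of M/(1−st)M containing 0, there is a set of coset representatives A' of M'/(1−st)M' and a bijection g : O_s(A) → O_s(A') with g(A) = A' satisfying (1−st)·g(α) = h((1−st)·α) and g(s·α + ω) = s·g(α) + h(ω) for all α ∈ A and ω ∈ (1−st)M with s·α + ω ∈ O_s(A). -/

import Mathlib

noncomputable section

/-- The Laurent polynomial ring `ℤ[s^{±1}, t^{±1}]` in two variables,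
realized as the group algebra of `ℤ × ℤ` over `ℤ`. -/
abbrev L : Type := AddMonoidAlgebra ℤ (ℤ × ℤ)

/-- The variable `s`. -/
def sL : L := AddMonoidAlgebra.single (1, 0) 1
/-- The variable `t`. -/
def tL : L := AddMonoidAlgebra.single (0, 1) 1
/-- The inverse `s⁻¹`. -/
def sLi : L := AddMonoidAlgebra.single (-1, 0) 1
/-- The inverse `t⁻¹`. -/
def tLi : L := AddMonoidAlgebra.single (0, -1) 1

/-- `s` as a unit of `L`. -/
def sU : Lˣ where
  val := sL
  inv := sLi
  val_inv := by
    simp [sL, sLi, AddMonoidAlgebra.single_mul_single, AddMonoidAlgebra.one_def, Prod.ext_iff]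
    rfl
  inv_val := by
    simp [sL, sLi, AddMonoidAlgebra.single_mul_single, AddMonoidAlgebra.one_def, Prod.ext_iff]
    rfl

/-- The submodule `(1-st)M`. -/
def Dsub (M : Type) [AddCommGroup M] [Module L M] : Submodule L M :=
  LinearMap.range (LinearMap.lsmul L M (1 - sL * tL))

/-- The `s`-orbit `O_s(X)` of a subset `X ⊆ M`. -/
def Os {M : Type} [AddCommGroup M] [Module L M] (X : Set M) : Set M :=
  { y | ∃ (n : ℤ) (x : M), x ∈ X ∧ y = ((sU ^ n : Lˣ) : L) • x }

/-- `A` is a set of coset representatives for `M/(1-st)M`. -/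
def IsCR (M : Type) [AddCommGroup M] [Module L M] (A : Set M) : Prop :=
  ∀ x : M, ∃! a, a ∈ A ∧ x - a ∈ Dsub M

/-- `f` preserves the four Alexander biquandle operations. -/
def IsBqHom {M M' : Type} [AddCommGroup M] [Module L M] [AddCommGroup M'] [Module L M']
    (f : M → M') : Prop :=
  (∀ x y : M, f (tL • x + (1 - sL * tL) • y) = tL • f x + (1 - sL * tL) • f y) ∧
  (∀ x : M, f (sL • x) = sL • f x) ∧
  (∀ x y : M, f (tLi • x + (1 - sLi * tLi) • y) = tLi • f x + (1 - sLi * tLi) • f y) ∧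
  (∀ x : M, f (sLi • x) = sLi • f x)

/-!
For a bijective biquandle homomorphism `f`, the element `f 0` is fixed by `s`, and `x ↦ f x - f 0`
is again a biquandle isomorphism, now fixing `0`. Such a map satisfies `f (x + ω) = f x + f ω`
for `ω ∈ (1 - st)M` and commutes with `s` and `t`, so its restriction to `(1 - st)M` is the module
isomorphism `h`, and `f` itself is the bijection `g` for every set of representatives.

Conversely, given `h` and `g` for a set of representatives `A`, the map
`F (α + ω) = g α + h ω` (`α ∈ A`, `ω ∈ (1 - st)M`) is bijective, commutes with `s` and satisfies
`h ((1 - st) y) = (1 - st) F y`; these three properties give all four biquandle operations.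
-/

def tU : Lˣ where
  val := tL
  inv := tLi
  val_inv := by
    simp [tL, tLi, AddMonoidAlgebra.single_mul_single, AddMonoidAlgebra.one_def]
    rfl
  inv_val := by
    simp [tL, tLi, AddMonoidAlgebra.single_mul_single, AddMonoidAlgebra.one_def]
    rfl

lemma sLi_mul_sL : sLi * sL = 1 := sU.inv_val
lemma tL_mul_tLi : tL * tLi = 1 := tU.val_inv
lemma tLi_mul_tL : tLi * tL = 1 := tU.inv_val

lemma sLi_tLi_mul_sL_tL : sLi * tLi * (sL * tL) = 1 := by
  linear_combination (sLi * sL) * tLi_mul_tL + sLi_mul_sL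

section

variable (R : Type*) {M M' : Type*} [Monoid R] [MulAction R M] [MulAction R M']

def commutingUnits (f : M → M') : Subgroup Rˣ where
  carrier := {u | ∀ x, f ((u : R) • x) = (u : R) • f x}
  mul_mem' {u v} hu hv x := by rw [Units.val_mul, mul_smul, mul_smul, hu, hv]
  one_mem' x := by simp
  inv_mem' {u} hu x := by
    have := hu (((u⁻¹ : Rˣ) : R) • x)
    rw [← mul_smul, Units.mul_inv, one_smul] at this
    rw [this, ← mul_smul, Units.inv_mul, one_smul]

end

/-- The embedding `ℤ × ℤ → Lˣ`, `(a, b) ↦ s^a t^b`. -/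
def monomialUnits : Multiplicative (ℤ × ℤ) →* Lˣ :=
  (Units.map (AddMonoidAlgebra.of ℤ (ℤ × ℤ))).comp toUnits.toMonoidHom

lemma monomialUnits_ofAdd (m : ℤ × ℤ) : monomialUnits (.ofAdd m) = sU ^ m.1 * tU ^ m.2 := by
  have hs : monomialUnits (.ofAdd (1, 0)) = sU := Units.ext (by simp [monomialUnits]; rfl)
  have ht : monomialUnits (.ofAdd (0, 1)) = tU := Units.ext (by simp [monomialUnits]; rfl)
  have : Multiplicative.ofAdd m = .ofAdd (1, 0) ^ m.1 * .ofAdd ((0 : ℤ), (1 : ℤ)) ^ m.2 := by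
    rw [← ofAdd_zsmul, ← ofAdd_zsmul, ← ofAdd_add]; simp
  rw [this, map_mul, map_zpow, map_zpow, hs, ht]

variable {M M' : Type} [AddCommGroup M] [Module L M] [AddCommGroup M'] [Module L M']

lemma AddMonoidHom.map_smul_of_map_sL_smul_of_map_tL_smul (φ : M →+ M')
    (hs : ∀ x, φ (sL • x) = sL • φ x) (ht : ∀ x, φ (tL • x) = tL • φ x) (c : L) (x : M) :
    φ (c • x) = c • φ x := by
  induction c using AddMonoidAlgebra.induction_on generalizing x with
  | of m =>
    have hmem : monomialUnits (.ofAdd m) ∈ commutingUnits L φ := monomialUnits_ofAdd m ▸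
      mul_mem (zpow_mem (show sU ∈ commutingUnits L φ from hs) _)
        (zpow_mem (show tU ∈ commutingUnits L φ from ht) _)
    exact hmem x
  | add c d hc hd => simp only [add_smul, map_add, hc, hd]
  | smul r c hc => rw [smul_assoc, map_zsmul, hc, smul_assoc]

lemma smul_mem_Dsub (y : M) : (1 - sL * tL) • y ∈ Dsub M := ⟨y, rfl⟩

theorem isBqHom_of_shift (h : Dsub M →ₗ[L] Dsub M') {F : M → M'}
    (hshift : ∀ x ω (hω : ω ∈ Dsub M), F (x + ω) = F x + h ⟨ω, hω⟩)
    (hs : ∀ x, F (sL • x) = sL • F x)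
    (hδ : ∀ y, (h ⟨(1 - sL * tL) • y, smul_mem_Dsub y⟩ : M') = (1 - sL * tL) • F y) :
    IsBqHom F := by
  have hsi : ∀ x, F (sLi • x) = sLi • F x := (commutingUnits L F).inv_mem (x := sU) hs
  have hδ' : ∀ (c : L) y, (h ⟨(1 - sL * tL) • c • y, smul_mem_Dsub _⟩ : M')
      = c • (1 - sL * tL) • F y := by
    intro c y
    have hc : (⟨(1 - sL * tL) • c • y, smul_mem_Dsub _⟩ : Dsub M)
        = c • ⟨(1 - sL * tL) • y, smul_mem_Dsub y⟩ :=
      Subtype.ext (smul_comm _ _ _)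
    rw [hc, map_smul, Submodule.coe_smul, hδ]
  -- `t = s⁻¹ - s⁻¹ (1 - st)`, so `t` acts through `s⁻¹` and a shift.
  have ht : ∀ x, F (tL • x) = tL • F x := by
    intro x
    have hx : tL • x = sLi • x + (1 - sL * tL) • (-sLi) • x := by
      linear_combination (norm := module) -(sLi_mul_sL • tL • x)
    rw [hx, hshift _ _ (smul_mem_Dsub _), hsi, hδ']
    linear_combination (norm := module) sLi_mul_sL • tL • F x
  have hti : ∀ x, F (tLi • x) = tLi • F x := (commutingUnits L F).inv_mem (x := tU) ht
  refine ⟨fun x y => ?_, hs, fun x y => ?_, hsi⟩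
  · rw [hshift _ _ (smul_mem_Dsub y), ht, hδ]
  · have hy : (1 - sLi * tLi) • y = (1 - sL * tL) • (-(sLi * tLi)) • y := by
      linear_combination (norm := module) -(sLi_tLi_mul_sL_tL • y)
    rw [hy, hshift _ _ (smul_mem_Dsub _), hti, hδ']
    linear_combination (norm := module) sLi_tLi_mul_sL_tL • F y

namespace IsBqHom

variable {f : M → M'} (hf : IsBqHom f)
include hf

lemma sL_smul_map_zero : sL • f 0 = f 0 := by
  have h := hf.1 0 0
  simp only [smul_zero, add_zero] at h
  linear_combination (norm := module) tLi • h - tLi_mul_tL • (sL • f 0 - f 0)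

lemma sub_const {c : M'} (hc : sL • c = c) : IsBqHom (fun x => f x - c) := by
  have hci : sLi • c = c := by
    linear_combination (norm := module) -(sLi • hc) + sLi_mul_sL • c
  obtain ⟨h1, h2, h3, h4⟩ := hf
  refine ⟨fun x y => ?_, fun x => ?_, fun x y => ?_, fun x => ?_⟩
  · linear_combination (norm := module) h1 x y - tL • hc
  · linear_combination (norm := module) h2 x + hc
  · linear_combination (norm := module) h3 x y - tLi • hci
  · linear_combination (norm := module) h4 x + hci

variable (h0 : f 0 = 0)
include h0

lemma map_tL_smul (x : M) : f (tL • x) = tL • f x := by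
  simpa [h0] using hf.1 x 0

lemma map_stSub_smul (y : M) : f ((1 - sL * tL) • y) = (1 - sL * tL) • f y := by
  simpa [h0] using hf.1 0 y

lemma map_add_of_mem_Dsub (x : M) {ω : M} (hω : ω ∈ Dsub M) : f (x + ω) = f x + f ω := by
  obtain ⟨y, rfl⟩ := hω
  have h := hf.1 (tLi • x) y
  rw [← mul_smul, tL_mul_tLi, one_smul] at h
  rw [LinearMap.lsmul_apply, h, hf.map_stSub_smul h0, ← hf.map_tL_smul h0, ← mul_smul,
    tL_mul_tLi, one_smul]

lemma map_mem_Dsub {ω : M} (hω : ω ∈ Dsub M) : f ω ∈ Dsub M' := by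
  obtain ⟨y, rfl⟩ := hω
  exact hf.map_stSub_smul h0 y ▸ smul_mem_Dsub (f y)

def restrictDsub : Dsub M →ₗ[L] Dsub M' :=
  let φ : Dsub M →+ Dsub M' := AddMonoidHom.mk' (fun ω => ⟨f ω, hf.map_mem_Dsub h0 ω.2⟩)
    fun ω ω' => Subtype.ext (hf.map_add_of_mem_Dsub h0 ω ω'.2)
  { φ with
    map_smul' := φ.map_smul_of_map_sL_smul_of_map_tL_smul
      (fun ω => Subtype.ext (hf.2.1 ω)) (fun ω => Subtype.ext (hf.map_tL_smul h0 ω)) }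

lemma coe_restrictDsub_apply (ω : Dsub M) : (hf.restrictDsub h0 ω : M') = f ω := rfl

lemma restrictDsub_bijective (hbij : Function.Bijective f) :
    Function.Bijective (hf.restrictDsub h0) := by
  refine ⟨fun ω ω' hωω' => Subtype.ext (hbij.1 (congrArg Subtype.val hωω')), ?_⟩
  rintro ⟨_, y', rfl⟩
  obtain ⟨y, rfl⟩ := hbij.2 y'
  exact ⟨⟨_, smul_mem_Dsub y⟩, Subtype.ext (hf.map_stSub_smul h0 y)⟩

end IsBqHom

namespace IsCR

variable {A : Set M} (hA : IsCR M A)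
include hA

lemma eq_of_sub_mem {a b : M} (ha : a ∈ A) (hb : b ∈ A) (hab : a - b ∈ Dsub M) : a = b :=
  (hA a).unique ⟨ha, by simp⟩ ⟨hb, hab⟩

def rep (x : M) : M := (hA x).exists.choose

lemma rep_mem (x : M) : hA.rep x ∈ A := (hA x).exists.choose_spec.1

lemma sub_rep_mem (x : M) : x - hA.rep x ∈ Dsub M := (hA x).exists.choose_spec.2

lemma rep_eq_of_sub_mem {x a : M} (ha : a ∈ A) (hxa : x - a ∈ Dsub M) : hA.rep x = a :=
  (hA x).unique ⟨hA.rep_mem x, hA.sub_rep_mem x⟩ ⟨ha, hxa⟩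

lemma rep_of_mem {a : M} (ha : a ∈ A) : hA.rep a = a :=
  hA.rep_eq_of_sub_mem ha (by simp)

lemma rep_add (x : M) {ω : M} (hω : ω ∈ Dsub M) : hA.rep (x + ω) = hA.rep x :=
  hA.rep_eq_of_sub_mem (hA.rep_mem x) (by
    rw [add_sub_right_comm]; exact add_mem (hA.sub_rep_mem x) hω)

lemma image {g : M → M'} (hg : Function.Bijective g)
    (hsub : ∀ x y, g x - g y ∈ Dsub M' ↔ x - y ∈ Dsub M) : IsCR M' (g '' A) := by
  intro x'
  obtain ⟨x, rfl⟩ := hg.2 x'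
  refine ⟨g (hA.rep x),
    ⟨Set.mem_image_of_mem g (hA.rep_mem x), (hsub _ _).2 (hA.sub_rep_mem x)⟩, ?_⟩
  rintro _ ⟨⟨a, ha, rfl⟩, hxa⟩
  rw [hA.rep_eq_of_sub_mem ha ((hsub _ _).1 hxa)]

end IsCR

lemma isCR_range {r : M ⧸ Dsub M → M} (hr : ∀ c, Submodule.Quotient.mk (r c) = c) :
    IsCR M (Set.range r) := by
  intro x
  refine ⟨r (Submodule.Quotient.mk x), ⟨⟨_, rfl⟩, (Submodule.Quotient.eq _).1 (hr _).symm⟩, ?_⟩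
  rintro _ ⟨⟨c, rfl⟩, hxc⟩
  rw [(Submodule.Quotient.eq _).2 hxc, hr]

lemma exists_isCR_zero_mem (M : Type) [AddCommGroup M] [Module L M] :
    ∃ A : Set M, IsCR M A ∧ (0 : M) ∈ A := by
  classical
  let r : M ⧸ Dsub M → M := Function.update Quotient.out 0 0
  have hr : ∀ c, Submodule.Quotient.mk (r c) = c := by
    intro c
    by_cases hc : c = 0
    · simp [r, hc]
    · simp [r, hc, Submodule.Quotient.mk_out]
  exact ⟨_, isCR_range hr, 0, by simp [r]⟩

lemma subset_Os (A : Set M) : A ⊆ Os A := fun a ha => ⟨0, a, ha, by simp⟩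

lemma bijOn_Os_image {g : M → M'} (hg : Function.Injective g) (hs : ∀ x, g (sL • x) = sL • g x)
    (A : Set M) : Set.BijOn g (Os A) (Os (g '' A)) := by
  have hzpow : ∀ (n : ℤ) x, g (((sU ^ n : Lˣ) : L) • x) = ((sU ^ n : Lˣ) : L) • g x :=
    fun n => zpow_mem (show sU ∈ commutingUnits L g from hs) n
  refine ⟨?_, hg.injOn, ?_⟩
  · rintro _ ⟨n, a, ha, rfl⟩
    exact ⟨n, g a, Set.mem_image_of_mem g ha, hzpow n a⟩
  · rintro _ ⟨n, _, ⟨a, ha, rfl⟩, rfl⟩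
    exact ⟨_, ⟨n, a, ha, rfl⟩, hzpow n a⟩

/-- Condition (ii) of the theorem, for given `h`, `A`, `A'` and `g`. -/
def CompatibleOrbitMap (h : Dsub M ≃ₗ[L] Dsub M') (A : Set M) (A' : Set M') (g : M → M') :
    Prop :=
  Set.BijOn g (Os A) (Os A') ∧ g '' A = A' ∧
    (∀ α ∈ A, (1 - sL * tL) • g α = (h ⟨(1 - sL * tL) • α, ⟨α, rfl⟩⟩ : M')) ∧
    (∀ α ∈ A, ∀ ω (hω : ω ∈ Dsub M), sL • α + ω ∈ Os A →
      g (sL • α + ω) = sL • g α + (h ⟨ω, hω⟩ : M'))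

namespace IsBqHom

variable {f : M → M'} (hf : IsBqHom f) (h0 : f 0 = 0) (hbij : Function.Bijective f)
include hf h0 hbij

def restrictDsubEquiv : Dsub M ≃ₗ[L] Dsub M' :=
  LinearEquiv.ofBijective (hf.restrictDsub h0) (hf.restrictDsub_bijective h0 hbij)

lemma sub_mem_Dsub_iff (x y : M) : f x - f y ∈ Dsub M' ↔ x - y ∈ Dsub M := by
  refine ⟨fun hxy => ?_, fun hxy => ?_⟩
  · obtain ⟨ω, hω⟩ := (hf.restrictDsub_bijective h0 hbij).2 ⟨_, hxy⟩
    have hfx : f x = f (y + ω) := by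
      rw [hf.map_add_of_mem_Dsub h0 y ω.2, ← coe_restrictDsub_apply hf h0, hω, add_sub_cancel]
    rw [hbij.1 hfx, add_sub_cancel_left]
    exact ω.2
  · rw [← sub_add_cancel x y, add_comm, hf.map_add_of_mem_Dsub h0 y hxy, add_sub_cancel_left]
    exact hf.map_mem_Dsub h0 hxy

lemma compatibleOrbitMap {A : Set M} :
    CompatibleOrbitMap (hf.restrictDsubEquiv h0 hbij) A (f '' A) f :=
  ⟨bijOn_Os_image hbij.1 hf.2.1 A, rfl, fun α _ => (hf.map_stSub_smul h0 α).symm,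
    fun α _ _ hω _ => by rw [hf.map_add_of_mem_Dsub h0 _ hω, hf.2.1]; rfl⟩

end IsBqHom

theorem exists_compatibleOrbitMap_of_isBqHom {f : M → M'} (hf : IsBqHom f)
    (hbij : Function.Bijective f) :
    ∃ h : Dsub M ≃ₗ[L] Dsub M', ∀ A : Set M, IsCR M A →
      ∃ A' : Set M', IsCR M' A' ∧ ∃ g : M → M', CompatibleOrbitMap h A A' g := by
  set f₀ : M → M' := fun x => f x - f 0
  have hf₀ : IsBqHom f₀ := hf.sub_const hf.sL_smul_map_zero
  have h0 : f₀ 0 = 0 := sub_self _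
  have hbij₀ : Function.Bijective f₀ := (Equiv.subRight (f 0)).bijective.comp hbij
  exact ⟨hf₀.restrictDsubEquiv h0 hbij₀, fun A hA =>
    ⟨_, hA.image hbij₀ (hf₀.sub_mem_Dsub_iff h0 hbij₀), f₀, hf₀.compatibleOrbitMap h0 hbij₀⟩⟩

namespace IsCR

variable {A : Set M} (hA : IsCR M A) (h : Dsub M ≃ₗ[L] Dsub M') (g : M → M')

def extend (x : M) : M' := g (hA.rep x) + h ⟨x - hA.rep x, hA.sub_rep_mem x⟩

lemma extend_add (x : M) {ω : M} (hω : ω ∈ Dsub M) :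
    hA.extend h g (x + ω) = hA.extend h g x + h ⟨ω, hω⟩ := by
  have hsub : (⟨x + ω - hA.rep (x + ω), hA.sub_rep_mem _⟩ : Dsub M)
      = ⟨x - hA.rep x, hA.sub_rep_mem x⟩ + ⟨ω, hω⟩ :=
    Subtype.ext (by simp only [Submodule.coe_add]; rw [hA.rep_add x hω]; abel)
  rw [extend, extend, hsub, map_add, hA.rep_add x hω, Submodule.coe_add, add_assoc]

lemma extend_of_mem {α : M} (hα : α ∈ A) : hA.extend h g α = g α := by
  have hsub : (⟨α - hA.rep α, hA.sub_rep_mem α⟩ : Dsub M) = 0 :=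
    Subtype.ext (by simp [hA.rep_of_mem hα])
  rw [extend, hsub, map_zero, hA.rep_of_mem hα, Submodule.coe_zero, add_zero]

variable {g}

lemma extend_sL_smul
    (hg : ∀ α ∈ A, ∀ ω (hω : ω ∈ Dsub M), sL • α + ω ∈ Os A →
      g (sL • α + ω) = sL • g α + (h ⟨ω, hω⟩ : M')) (x : M) :
    hA.extend h g (sL • x) = sL • hA.extend h g x := by
  -- For `α ∈ A` and `β` the representative of `s α`, condition (ii) with `ω = β - s α`
  -- gives `g β = s g α + h ω`.
  have hrep : ∀ α ∈ A, hA.extend h g (sL • α) = sL • g α := by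
    intro α hα
    set β := hA.rep (sL • α)
    have hω : β - sL • α ∈ Dsub M := by
      rw [← neg_sub]; exact neg_mem (hA.sub_rep_mem _)
    have hβ : sL • α + (β - sL • α) = β := add_sub_cancel _ _
    have hgβ := hg α hα _ hω (by rw [hβ]; exact subset_Os A (hA.rep_mem _))
    rw [hβ] at hgβ
    have := hA.extend_add h g (sL • α) hω
    rw [hβ, hA.extend_of_mem h g (hA.rep_mem _), hgβ, add_left_inj] at this
    exact this.symm
  have hsx : sL • (x - hA.rep x) ∈ Dsub M := Submodule.smul_mem _ _ (hA.sub_rep_mem x)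
  calc hA.extend h g (sL • x)
      = hA.extend h g (sL • hA.rep x + sL • (x - hA.rep x)) := by rw [← smul_add, add_sub_cancel]
    _ = sL • g (hA.rep x) + sL • h ⟨x - hA.rep x, hA.sub_rep_mem x⟩ := by
      rw [hA.extend_add h g _ hsx, hrep _ (hA.rep_mem x), ← Submodule.coe_smul, ← map_smul]; rfl
    _ = sL • hA.extend h g x := by rw [extend, smul_add]

lemma map_stSub_smul_eq_smul_extend
    (hg : ∀ α ∈ A, (1 - sL * tL) • g α = (h ⟨(1 - sL * tL) • α, ⟨α, rfl⟩⟩ : M')) (y : M) :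
    (h ⟨(1 - sL * tL) • y, smul_mem_Dsub y⟩ : M') = (1 - sL * tL) • hA.extend h g y := by
  have hsplit : (⟨(1 - sL * tL) • y, smul_mem_Dsub y⟩ : Dsub M)
      = ⟨(1 - sL * tL) • hA.rep y, smul_mem_Dsub _⟩
        + (1 - sL * tL) • ⟨y - hA.rep y, hA.sub_rep_mem y⟩ :=
    Subtype.ext (by simp only [Submodule.coe_add, Submodule.coe_smul, smul_sub, add_sub_cancel])
  rw [hsplit, map_add, map_smul, Submodule.coe_add, Submodule.coe_smul, ← hg _ (hA.rep_mem y),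
    extend, smul_add]

lemma extend_bijective {A' : Set M'} (hA' : IsCR M' A') (himg : g '' A = A')
    (hinj : Set.InjOn g A) : Function.Bijective (hA.extend h g) := by
  have hgA : ∀ x, g (hA.rep x) ∈ A' := fun x => himg ▸ Set.mem_image_of_mem g (hA.rep_mem x)
  refine ⟨fun x y hxy => ?_, fun x' => ?_⟩
  · rw [extend, extend] at hxy
    have hD : g (hA.rep x) - g (hA.rep y) ∈ Dsub M' := by
      rw [sub_eq_sub_iff_add_eq_add.2 (hxy.trans (add_comm _ _))]
      exact sub_mem (h _).2 (h _).2
    have hrep : hA.rep x = hA.rep y :=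
      hinj (hA.rep_mem x) (hA.rep_mem y) (hA'.eq_of_sub_mem (hgA x) (hgA y) hD)
    rw [hinj.eq_iff (hA.rep_mem x) (hA.rep_mem y) |>.2 hrep, add_right_inj] at hxy
    have hsub : x - hA.rep x = y - hA.rep y := congrArg Subtype.val (h.injective (Subtype.ext hxy))
    rwa [hrep, sub_left_inj] at hsub
  · obtain ⟨α, hα, hgα⟩ : hA'.rep x' ∈ g '' A := himg ▸ hA'.rep_mem x'
    obtain ⟨ω, hω⟩ := h.surjective ⟨x' - hA'.rep x', hA'.sub_rep_mem x'⟩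
    refine ⟨α + ω, ?_⟩
    rw [hA.extend_add h g α ω.2, hA.extend_of_mem h g hα, hgα, Subtype.coe_eta, hω,
      add_sub_cancel]

end IsCR

theorem exists_isBqHom_of_compatibleOrbitMap {h : Dsub M ≃ₗ[L] Dsub M'} {A : Set M}
    {A' : Set M'} {g : M → M'} (hA : IsCR M A) (hA' : IsCR M' A')
    (hg : CompatibleOrbitMap h A A' g) :
    ∃ f : M → M', Function.Bijective f ∧ IsBqHom f :=
  ⟨hA.extend h g, hA.extend_bijective h hA' hg.2.1 (hg.1.2.1.mono (subset_Os A)),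
    isBqHom_of_shift h.toLinearMap (hA.extend_add h g) (hA.extend_sL_smul h hg.2.2.2)
      (hA.map_stSub_smul_eq_smul_extend h hg.2.2.1)⟩

/-- Main theorem: two Alexander biquandles are isomorphic iff their `(1-st)`-submodules
are isomorphic as modules compatibly with a bijection of `s`-orbits of coset
representatives. -/
theorem stmt_15 (M M' : Type) [AddCommGroup M] [Module L M] [AddCommGroup M'] [Module L M'] :
    (∃ f : M → M', Function.Bijective f ∧ IsBqHom f) ↔
    (∃ h : Dsub M ≃ₗ[L] Dsub M',
      ∀ A : Set M, IsCR M A → (0 : M) ∈ A →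
        ∃ A' : Set M', IsCR M' A' ∧
          ∃ g : M → M', Set.BijOn g (Os A) (Os A') ∧ g '' A = A' ∧
            (∀ α ∈ A, (1 - sL * tL) • g α = (h ⟨(1 - sL * tL) • α, ⟨α, rfl⟩⟩ : M')) ∧
            (∀ α ∈ A, ∀ ω (hω : ω ∈ Dsub M), sL • α + ω ∈ Os A →
              g (sL • α + ω) = sL • g α + (h ⟨ω, hω⟩ : M'))) := by
  constructor
  · rintro ⟨f, hbij, hf⟩
    obtain ⟨h, hh⟩ := exists_compatibleOrbitMap_of_isBqHom hf hbij
    exact ⟨h, fun A hA _ => hh A hA⟩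
  · rintro ⟨h, hh⟩
    obtain ⟨A, hA, h0A⟩ := exists_isCR_zero_mem M
    obtain ⟨A', hA', g, hg⟩ := hh A hA h0A
    exact exists_isBqHom_of_compatibleOrbitMap hA hA' hg
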